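/- Let E be a real Hilbert space, μ a measure on a measurable space α, and p > 1 a real number. Let W be a linear subspace of L^p(μ;E), and let F, G ∈ L^p(μ;E) with F − G ∈ W. If ∫ ⟪Φ_p(F(x)), H(x)⟫ dμ(x) = ∫ ⟪Φ_p(G(x)), H(x)⟫ dμ(x) for every H ∈ W, then F(x) = G(x) for μ-almost every x. -/

import Mathlib

open MeasureTheory
open scoped RealInnerProductSpace ENNReal

section aux

variable {E : Type*} [NormedAddCommGroup E] [InnerProductSpace ℝ E]

/-- `‖Φ_p a‖ = ‖a‖ ^ (p-1)`. -/
lemma norm_phi_aux (p : ℝ) (hp : 1 < p) (a : E) :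
    ‖(‖a‖ ^ (p - 2)) • a‖ = ‖a‖ ^ (p - 1) := by
  rcases eq_or_ne a 0 with rfl | ha
  · simp [Real.zero_rpow (by linarith : p - 1 ≠ 0)]
  · have hA : ‖a‖ ≠ 0 := norm_ne_zero_iff.mpr ha
    rw [norm_smul, Real.norm_eq_abs, abs_of_nonneg (Real.rpow_nonneg (norm_nonneg a) _)]
    rw [show p - 1 = (p - 2) + 1 by ring, Real.rpow_add_one hA]

/-- Strict monotonicity of the p-Laplacian vector field. -/
lemma phi_inner_pos (p : ℝ) (hp : 1 < p) (a b : E) (hab : a ≠ b) :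
    0 < ⟪(‖a‖ ^ (p - 2)) • a - (‖b‖ ^ (p - 2)) • b, a - b⟫ := by
  have expand : ⟪(‖a‖ ^ (p - 2)) • a - (‖b‖ ^ (p - 2)) • b, a - b⟫ =
      (‖a‖ ^ (p - 2)) * ⟪a, a⟫ + (‖b‖ ^ (p - 2)) * ⟪b, b⟫
        - ((‖a‖ ^ (p - 2)) + (‖b‖ ^ (p - 2))) * ⟪a, b⟫ := by
    rw [inner_sub_left, inner_sub_right, inner_sub_right, real_inner_smul_left,
      real_inner_smul_left, real_inner_smul_left, real_inner_smul_left,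
      real_inner_comm b a]
    ring
  rw [expand]
  set A := ‖a‖ with hA
  set B := ‖b‖ with hB
  have hinnaa : ⟪a, a⟫ = A * A := real_inner_self_eq_norm_mul_norm a
  have hinnbb : ⟪b, b⟫ = B * B := real_inner_self_eq_norm_mul_norm b
  have hCle : ⟪a, b⟫ ≤ A * B := real_inner_le_norm a b
  rcases eq_or_ne a 0 with rfl | ha
  · have hb : b ≠ 0 := fun hb => hab (by rw [hb])
    have hBpos : (0:ℝ) < B := norm_pos_iff.mpr hb
    have hd : (0:ℝ) < B ^ (p - 2) := Real.rpow_pos_of_pos hBpos _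
    have : ⟪(0:E), b⟫ = 0 := inner_zero_left b
    rw [hinnaa, hinnbb, this]
    have hA0 : A = 0 := by simp [hA]
    rw [hA0]
    nlinarith [mul_pos hd (mul_pos hBpos hBpos)]
  rcases eq_or_ne b 0 with rfl | hb
  · have hApos : (0:ℝ) < A := norm_pos_iff.mpr ha
    have hc : (0:ℝ) < A ^ (p - 2) := Real.rpow_pos_of_pos hApos _
    have : ⟪a, (0:E)⟫ = 0 := inner_zero_right a
    rw [hinnaa, hinnbb, this]
    have hB0 : B = 0 := by simp [hB]
    rw [hB0]
    nlinarith [mul_pos hc (mul_pos hApos hApos)]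
  have hApos : (0:ℝ) < A := norm_pos_iff.mpr ha
  have hBpos : (0:ℝ) < B := norm_pos_iff.mpr hb
  have hc : (0:ℝ) < A ^ (p - 2) := Real.rpow_pos_of_pos hApos _
  have hd : (0:ℝ) < B ^ (p - 2) := Real.rpow_pos_of_pos hBpos _
  have hcA : A ^ (p - 2) * A = A ^ (p - 1) := by
    rw [show p - 1 = (p - 2) + 1 by ring, Real.rpow_add_one (ne_of_gt hApos)]
  have hdB : B ^ (p - 2) * B = B ^ (p - 1) := by
    rw [show p - 1 = (p - 2) + 1 by ring, Real.rpow_add_one (ne_of_gt hBpos)]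
  rw [hinnaa, hinnbb]
  rcases lt_trichotomy A B with hABlt | hABeq | hABgt
  · have huv : A ^ (p - 1) < B ^ (p - 1) :=
      Real.rpow_lt_rpow (le_of_lt hApos) hABlt (by linarith)
    nlinarith
  · -- equal norms: then ⟪a,b⟫ < A * B since a ≠ b
    have hsub : (0:ℝ) < ‖a - b‖ := norm_pos_iff.mpr (sub_ne_zero.mpr hab)
    have hnsq : ‖a - b‖ * ‖a - b‖ = ⟪a, a⟫ - 2 * ⟪a, b⟫ + ⟪b, b⟫ := by
      rw [← real_inner_self_eq_norm_mul_norm]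
      rw [inner_sub_left, inner_sub_right, inner_sub_right, real_inner_comm b a]
      ring
    have hClt : ⟪a, b⟫ < A * B := by
      rw [hinnaa, hinnbb, hABeq] at hnsq
      nlinarith
    rw [hABeq] at hClt ⊢
    nlinarith [mul_pos (add_pos hc hd) (sub_pos.mpr hClt)]
  · have huv : B ^ (p - 1) < A ^ (p - 1) :=
      Real.rpow_lt_rpow (le_of_lt hBpos) hABgt (by linarith)
    nlinarith

lemma phi_inner_nonneg (p : ℝ) (hp : 1 < p) (a b : E) :
    0 ≤ ⟪(‖a‖ ^ (p - 2)) • a - (‖b‖ ^ (p - 2)) • b, a - b⟫ := by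
  rcases eq_or_ne a b with rfl | hab
  · simp
  · exact le_of_lt (phi_inner_pos p hp a b hab)

end aux

section integrable

variable {E : Type*} [NormedAddCommGroup E] [InnerProductSpace ℝ E]
  {α : Type*} [MeasurableSpace α] {μ : Measure α}

/-- Hölder: the pairing `⟪Φ_p(F), H⟫` is integrable for `F, H ∈ L^p`. -/
lemma integrable_phi_inner (p : ℝ) (hp : 1 < p) [Fact (1 ≤ ENNReal.ofReal p)]
    (F H : Lp E (ENNReal.ofReal p) μ) :
    Integrable (fun x => ⟪(‖F x‖ ^ (p - 2)) • F x, H x⟫) μ := by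
  have hp0 : (0:ℝ) < p := by linarith
  have hp10 : (0:ℝ) ≤ p - 1 := by linarith
  have hF : MemLp (⇑F) (ENNReal.ofReal p) μ := Lp.memLp F
  have hH : MemLp (⇑H) (ENNReal.ofReal p) μ := Lp.memLp H
  -- the function ‖F‖^(p-1) is in L^{p/(p-1)}
  have hg : MemLp (fun x => ‖F x‖ ^ (p - 1)) (ENNReal.ofReal p / ENNReal.ofReal (p - 1)) μ := by
    have := hF.norm_rpow_div (ENNReal.ofReal (p - 1))
    rwa [ENNReal.toReal_ofReal hp10] at this
  -- product bound in L¹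
  have hbound : MemLp (fun x => (‖F x‖ ^ (p - 1)) * ‖H x‖) 1 μ := by
    have hexp : (1 : ℝ≥0∞) / 1 = 1 / (ENNReal.ofReal p / ENNReal.ofReal (p - 1)) + 1 / ENNReal.ofReal p := by
      have hPne0 : ENNReal.ofReal p ≠ 0 := by
        simp [ENNReal.ofReal_eq_zero, not_le, hp0]
      have hPnetop : ENNReal.ofReal p ≠ ∞ := ENNReal.ofReal_ne_top
      have hane0 : ENNReal.ofReal (p - 1) ≠ 0 := by
        simp [ENNReal.ofReal_eq_zero, not_le]; linarith
      have hanetop : ENNReal.ofReal (p - 1) ≠ ∞ := ENNReal.ofReal_ne_top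
      rw [one_div, one_div, one_div, ENNReal.inv_div (Or.inl hanetop) (Or.inl hane0)]
      rw [show (ENNReal.ofReal p)⁻¹ = 1 / ENNReal.ofReal p from (one_div _).symm,
        ENNReal.div_add_div_same]
      have : ENNReal.ofReal (p - 1) + 1 = ENNReal.ofReal p := by
        rw [← ENNReal.ofReal_one, ← ENNReal.ofReal_add hp10 zero_le_one]
        norm_num
      rw [this, ENNReal.div_self hPne0 hPnetop, inv_one]
    have := hH.norm.smul hg (hpqr := ⟨by simp only [one_div] at hexp; exact hexp.symm⟩)
    simpa [smul_eq_mul, Pi.mul_def] using this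
  have hib : Integrable (fun x => (‖F x‖ ^ (p - 1)) * ‖H x‖) μ :=
    memLp_one_iff_integrable.mp hbound
  -- measurability of the pairing
  have hmeasΦ : AEStronglyMeasurable (fun x => (‖F x‖ ^ (p - 2)) • F x) μ := by
    have h1 : AEMeasurable (fun x => ‖F x‖ ^ (p - 2)) μ :=
      (hF.1.norm.aemeasurable).pow_const _
    exact AEStronglyMeasurable.smul h1.aestronglyMeasurable hF.1
  have hmeas : AEStronglyMeasurable (fun x => ⟪(‖F x‖ ^ (p - 2)) • F x, H x⟫) μ :=
    hmeasΦ.inner hH.1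
  refine hib.mono' hmeas (Filter.Eventually.of_forall fun x => ?_)
  calc ‖⟪(‖F x‖ ^ (p - 2)) • F x, H x⟫‖
      ≤ ‖(‖F x‖ ^ (p - 2)) • F x‖ * ‖H x‖ := norm_inner_le_norm _ _
    _ = (‖F x‖ ^ (p - 1)) * ‖H x‖ := by rw [norm_phi_aux p hp]

end integrable

/-- Uniqueness argument in Theorem 4.5: if `F − G` lies in a subspace `W` of `L^p(μ;E)` and
`∫ ⟪Φ_p(F), H⟫ dμ = ∫ ⟪Φ_p(G), H⟫ dμ` for every `H ∈ W`, then `F = G` μ-a.e. -/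
theorem ae_eq_of_equal_pLaplace_integrals
    {E : Type*} [NormedAddCommGroup E] [InnerProductSpace ℝ E] [CompleteSpace E]
    {α : Type*} [MeasurableSpace α] (μ : Measure α)
    (p : ℝ) (hp : 1 < p) [Fact (1 ≤ ENNReal.ofReal p)]
    (W : Submodule ℝ (Lp E (ENNReal.ofReal p) μ))
    (F G : Lp E (ENNReal.ofReal p) μ) (hFG : F - G ∈ W)
    (h : ∀ H ∈ W, (∫ x, ⟪(‖F x‖ ^ (p - 2)) • F x, H x⟫ ∂μ) =
      ∫ x, ⟪(‖G x‖ ^ (p - 2)) • G x, H x⟫ ∂μ) :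
    ∀ᵐ x ∂μ, F x = G x := by
  set H : Lp E (ENNReal.ofReal p) μ := F - G with hHdef
  have hcoe : (⇑H : α → E) =ᵐ[μ] fun x => F x - G x := Lp.coeFn_sub F G
  have hIF : Integrable (fun x => ⟪(‖F x‖ ^ (p - 2)) • F x, H x⟫) μ :=
    integrable_phi_inner p hp F H
  have hIG : Integrable (fun x => ⟪(‖G x‖ ^ (p - 2)) • G x, H x⟫) μ :=
    integrable_phi_inner p hp G H
  have heq := h H hFG
  -- f is the nonnegative integrand
  set f : α → ℝ :=
    fun x => ⟪(‖F x‖ ^ (p - 2)) • F x - (‖G x‖ ^ (p - 2)) • G x, F x - G x⟫ with hfdef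
  have hfae : f =ᵐ[μ] fun x =>
      ⟪(‖F x‖ ^ (p - 2)) • F x, H x⟫ - ⟪(‖G x‖ ^ (p - 2)) • G x, H x⟫ := by
    filter_upwards [hcoe] with x hx
    rw [hfdef]
    simp only [hx, inner_sub_left]
  have hfint : Integrable f μ := (hIF.sub hIG).congr hfae.symm
  have hfnonneg : 0 ≤ᵐ[μ] f :=
    Filter.Eventually.of_forall fun x => phi_inner_nonneg p hp (F x) (G x)
  have hintf : ∫ x, f x ∂μ = 0 := by
    rw [integral_congr_ae hfae, integral_sub hIF hIG, heq, sub_self]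
  have hf0 : f =ᵐ[μ] 0 := (integral_eq_zero_iff_of_nonneg_ae hfnonneg hfint).mp hintf
  filter_upwards [hf0] with x hx
  by_contra hne
  exact absurd hx (ne_of_gt (phi_inner_pos p hp (F x) (G x) hne))
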